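/- arXiv:1006.4048 — 5 statements merged into one kernel-verified Lean document; each statement's English description precedes it below -/
import Mathlib

section
/- For every real number z > -1, one has h(|z|) ≤ h(z). -/
open Real Set

/-- The function `h` of Bennett's inequality. -/
noncomputable def bennettH (z : ℝ) : ℝ := (1 + z) * log (1 + z) - z

lemma hasDerivAt_bennettH {x : ℝ} (hx : 0 < 1 + x) : HasDerivAt bennettH (log (1 + x)) x := by
  have hlin : HasDerivAt (fun x : ℝ => 1 + x) 1 x := (hasDerivAt_id x).const_add 1
  have hlog : HasDerivAt (fun x : ℝ => log (1 + x)) (1 / (1 + x)) x := by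
    simpa [div_eq_inv_mul] using hlin.log hx.ne'
  refine ((hlin.mul hlog).sub (hasDerivAt_id x)).congr_deriv ?_
  field_simp
  ring

lemma bennettH_le_bennettH_neg {t : ℝ} (ht₀ : 0 ≤ t) (ht₁ : t < 1) :
    bennettH t ≤ bennettH (-t) := by
  have hderiv : ∀ s ∈ Ico (0 : ℝ) 1, HasDerivAt (fun s => bennettH (-s) - bennettH s)
      (-log (1 - s) - log (1 + s)) s := by
    rintro s ⟨hs₀, hs₁⟩
    have hneg := (hasDerivAt_bennettH (x := -s) (by linarith)).comp s (hasDerivAt_neg s)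
    refine (hneg.sub (hasDerivAt_bennettH (by linarith))).congr_deriv ?_
    ring_nf
  -- The derivative is `-log (1 - s ^ 2) ≥ 0`.
  have hmono : MonotoneOn (fun s => bennettH (-s) - bennettH s) (Ico 0 1) := by
    refine monotoneOn_of_hasDerivWithinAt_nonneg (convex_Ico 0 1)
      (fun s hs => (hderiv s hs).continuousAt.continuousWithinAt)
      (fun s hs => (hderiv s (interior_subset hs)).hasDerivWithinAt) ?_
    intro s hs
    rw [interior_Ico] at hs
    obtain ⟨hs₀, hs₁⟩ := hs
    have hprod : log (1 - s) + log (1 + s) ≤ 0 := by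
      rw [← log_mul (by linarith) (by linarith)]
      exact log_nonpos (by nlinarith) (by nlinarith)
    linarith
  have := hmono ⟨le_rfl, one_pos⟩ ⟨ht₀, ht₁⟩ ht₀
  simp only [neg_zero, sub_self] at this
  linarith

/-- For every real number `z > -1`, one has `h |z| ≤ h z`, where
`h z = (1+z) * log (1+z) - z`. -/
theorem entropy_function_abs_le (z : ℝ) (hz : -1 < z) :
    (1 + |z|) * Real.log (1 + |z|) - |z| ≤ (1 + z) * Real.log (1 + z) - z := by
  change bennettH |z| ≤ bennettH z
  rcases le_or_gt 0 z with hz₀ | hz₀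
  · rw [abs_of_nonneg hz₀]
  · simpa [abs_of_neg hz₀] using bennettH_le_bennettH_neg (t := -z) (by linarith) (by linarith)
end

section
/- For every real p ≥ 0, every λ ∈ (0,1], and every z > -1, one has p·|z| ≤ λ·h*(p) + (1/λ)·h(z), where h(z) = (1+z)·log(1+z) − z and h*(p) = e^p − p − 1. -/
/-!
Since `h*` is the Legendre transform of `h`, the Fenchel–Young inequality gives
`q * z ≤ h*(q) + h(z)` for all real `q` and `z > -1`. Apply it with `q = ±λp`, the sign being that
of `z`. As `h*(-q) ≤ h*(q)` for `q ≥ 0` and `h*(λp) ≤ λ² h*(p)` for `λ ∈ [0, 1]`, `p ≥ 0`,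
dividing by `λ` gives the inequality.
-/

open Real

namespace Bennett

noncomputable def h (z : ℝ) : ℝ := (1 + z) * log (1 + z) - z

noncomputable def hStar (p : ℝ) : ℝ := exp p - p - 1

theorem mul_le_hStar_add_h (q : ℝ) {z : ℝ} (hz : -1 < z) : q * z ≤ hStar q + h z := by
  have hz1 : 0 < 1 + z := by linarith
  have key : (1 + z) * (q - log (1 + z) + 1) ≤ exp q :=
    calc (1 + z) * (q - log (1 + z) + 1)
        ≤ (1 + z) * exp (q - log (1 + z)) := by gcongr; exact add_one_le_exp _
      _ = exp q := by rw [exp_sub, exp_log hz1]; field_simp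
  unfold hStar h
  nlinarith

theorem hStar_neg_le {q : ℝ} (hq : 0 ≤ q) : hStar (-q) ≤ hStar q := by
  have hsinh := self_le_sinh_iff.2 hq
  rw [sinh_eq] at hsinh
  unfold hStar
  linarith

theorem hasDerivAt_hStar (q : ℝ) : HasDerivAt hStar (exp q - 1) q := by
  show HasDerivAt (fun p ↦ exp p - p - 1) _ q
  simpa using ((hasDerivAt_exp q).sub (hasDerivAt_id q)).sub_const 1

/-- `λ² h*(q) - h*(λq)` vanishes at `0` and is monotone: its derivative
`λ (λ e^q + 1 - λ - e^{λq})` is nonnegative by convexity of `exp`. -/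
theorem hStar_mul_le {l p : ℝ} (hl0 : 0 ≤ l) (hl1 : l ≤ 1) (hp : 0 ≤ p) :
    hStar (l * p) ≤ l ^ 2 * hStar p := by
  have hderiv (q : ℝ) : HasDerivAt (fun q ↦ l ^ 2 * hStar q - hStar (l * q))
      (l ^ 2 * (exp q - 1) - (exp (l * q) - 1) * l) q := by
    have hlin : HasDerivAt (fun q ↦ l * q) l q := by
      simpa using (hasDerivAt_id q).const_mul l
    exact ((hasDerivAt_hStar q).const_mul _).sub ((hasDerivAt_hStar (l * q)).comp q hlin)
  have hmono := monotone_of_hasDerivAt_nonneg hderiv fun q ↦ by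
    have hconv : exp (l * q) ≤ (1 - l) + l * exp q := by
      simpa using convexOn_exp.2 (Set.mem_univ 0) (Set.mem_univ q) (by linarith) hl0 (by ring)
    simp only [Pi.zero_apply]
    nlinarith [mul_le_mul_of_nonneg_left hconv hl0]
  simpa [hStar] using hmono hp

end Bennett

open Bennett in
/-- Weighted Young inequality: for `p ≥ 0`, `λ ∈ (0,1]`, and `z > -1`,
`p * |z| ≤ λ * h* p + (1/λ) * h z`, where `h z = (1+z)*log(1+z) - z` and
`h* p = exp p - p - 1`. -/
theorem weighted_young_inequality (p l z : ℝ) (hp : 0 ≤ p) (hl0 : 0 < l) (hl1 : l ≤ 1)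
    (hz : -1 < z) :
    p * |z| ≤ l * (Real.exp p - p - 1) + (1 / l) * ((1 + z) * Real.log (1 + z) - z) := by
  obtain ⟨q, hqz, hq⟩ : ∃ q, q * z = l * p * |z| ∧ hStar q ≤ l ^ 2 * hStar p := by
    have hscale := hStar_mul_le hl0.le hl1 hp
    rcases le_or_gt 0 z with hz0 | hz0
    · exact ⟨l * p, by rw [abs_of_nonneg hz0], hscale⟩
    · exact ⟨-(l * p), by rw [abs_of_neg hz0]; ring, (hStar_neg_le (by positivity)).trans hscale⟩
  have hyoung := mul_le_hStar_add_h q hz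
  calc p * |z| = q * z / l := by rw [hqz]; field_simp
    _ ≤ (hStar q + h z) / l := by gcongr
    _ ≤ (l ^ 2 * hStar p + h z) / l := by gcongr
    _ = l * hStar p + 1 / l * h z := by field_simp
end

section
/- For all real numbers x > 0 and y > 0, one has (√x − √y)² ≤ x·log(x/y) − x + y. -/
/-- For all reals `x > 0`, `y > 0`, one has `(√x - √y)² ≤ x * log (x/y) - x + y`. -/
theorem sq_sqrt_sub_le_entropy (x y : ℝ) (hx : 0 < x) (hy : 0 < y) :
    (Real.sqrt x - Real.sqrt y) ^ 2 ≤ x * Real.log (x / y) - x + y := by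
  set a := Real.sqrt x with ha
  set b := Real.sqrt y with hb
  have hax : 0 < a := Real.sqrt_pos.mpr hx
  have hbx : 0 < b := Real.sqrt_pos.mpr hy
  have hxa : x = a ^ 2 := (Real.sq_sqrt hx.le).symm
  have hyb : y = b ^ 2 := (Real.sq_sqrt hy.le).symm
  have hlog : Real.log (x / y) = -2 * Real.log (b / a) := by
    rw [hxa, hyb, Real.log_div (by positivity) (by positivity),
      Real.log_div hbx.ne' hax.ne', Real.log_pow, Real.log_pow]
    ring
  have key : Real.log (b / a) ≤ b / a - 1 :=
    Real.log_le_sub_one_of_pos (by positivity)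
  rw [hlog, hxa, hyb]
  have h2 : a ^ 2 * (-2 * Real.log (b / a)) ≥ a ^ 2 * (-2 * (b / a - 1)) := by
    apply mul_le_mul_of_nonneg_left _ (by positivity)
    linarith
  have h3 : a ^ 2 * (-2 * (b / a - 1)) = 2 * a ^ 2 - 2 * a * b := by
    field_simp; ring
  nlinarith [sq_nonneg (a - b)]
end

section
/- For p ∈ {0, 2} and α > 0, define F_p(α) = ∫_{ℝ³} |v|^p · (α·e^{−|v|²/2})/(1 + α·e^{−|v|²/2}) dv (Lebesgue integral over ℝ³). Then F₂ is differentiable at every α > 0 and α·F₂′(α) = 3·F₀(α). -/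
open MeasureTheory

/-- The Fermi integral `F_p α = ∫_{ℝ³} |v|^p (α e^{-|v|²/2})/(1 + α e^{-|v|²/2}) dv`. -/
noncomputable def fermiIntegral (p : ℝ) (α : ℝ) : ℝ :=
  ∫ v : EuclideanSpace ℝ (Fin 3),
    ‖v‖ ^ p * (α * Real.exp (-‖v‖ ^ 2 / 2)) / (1 + α * Real.exp (-‖v‖ ^ 2 / 2))

/-!
In polar coordinates `F_p(α) = 4π ∫₀^∞ r^{p+2} f(α, r) dr` with `f(α, r) = M/(1+M)`,
`M = α e^{-r²/2}`. Both partial derivatives of `f` are multiples of `f(1 - f)`: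
`α ∂_α f = f(1 - f) = -(1/r) ∂_r f`. Differentiating under the integral sign therefore gives
`α F₂'(α) = -4π ∫ r³ ∂_r f dr`, and an integration by parts, whose boundary terms vanish,
turns this into `3 · 4π ∫ r² f dr = 3 F₀(α)`.
-/

open Real Set Filter Metric Topology

noncomputable def fermiDirac (α r : ℝ) : ℝ :=
  α * exp (-r ^ 2 / 2) / (1 + α * exp (-r ^ 2 / 2))

noncomputable def fermiDiracDerivParam (α r : ℝ) : ℝ :=
  exp (-r ^ 2 / 2) / (1 + α * exp (-r ^ 2 / 2)) ^ 2

lemma hasDerivAt_exp_neg_sq_div_two (r : ℝ) :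
    HasDerivAt (fun s : ℝ => exp (-s ^ 2 / 2)) (-r * exp (-r ^ 2 / 2)) r := by
  refine (((hasDerivAt_pow 2 r).neg).div_const 2).exp.congr_deriv ?_
  simp only [Pi.neg_apply]
  push_cast
  ring

lemma integrableOn_pow_mul_exp_neg_sq_div_two (k : ℕ) :
    IntegrableOn (fun r : ℝ => r ^ k * exp (-r ^ 2 / 2)) (Ioi 0) := by
  refine (integrableOn_rpow_mul_exp_neg_mul_sq (b := 1 / 2) (by norm_num)
    (s := k) (by linarith [k.cast_nonneg (α := ℝ)])).congr_fun (fun r _ => ?_) measurableSet_Ioi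
  simp only [rpow_natCast]
  ring_nf

lemma integrableOn_pow_mul_of_norm_le_gaussian {g : ℝ → ℝ} (hg : Measurable g) {c : ℝ}
    (hgc : ∀ r, ‖g r‖ ≤ c * exp (-r ^ 2 / 2)) (k : ℕ) :
    IntegrableOn (fun r => r ^ k * g r) (Ioi 0) := by
  refine ((integrableOn_pow_mul_exp_neg_sq_div_two k).const_mul c).mono' (by fun_prop) ?_
  filter_upwards [ae_restrict_mem measurableSet_Ioi] with r (hr : 0 < r)
  rw [norm_mul, norm_of_nonneg (by positivity), mul_left_comm]
  exact mul_le_mul_of_nonneg_left (hgc r) (by positivity)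

section FermiDirac

variable {α : ℝ}

lemma hasDerivAt_fermiDirac_param (r : ℝ) (hα : 0 ≤ α) :
    HasDerivAt (fermiDirac · r) (fermiDiracDerivParam α r) α := by
  have hden : 1 + α * exp (-r ^ 2 / 2) ≠ 0 := by positivity
  refine (((hasDerivAt_id' α).mul_const _).div
    (((hasDerivAt_id' α).mul_const _).const_add 1) hden).congr_deriv ?_
  rw [fermiDiracDerivParam]
  field_simp
  ring

lemma hasDerivAt_fermiDirac_radius (hα : 0 ≤ α) (r : ℝ) :
    HasDerivAt (fermiDirac α) (-(r * (α * fermiDiracDerivParam α r))) r := by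
  have hden : 1 + α * exp (-r ^ 2 / 2) ≠ 0 := by positivity
  refine (((hasDerivAt_exp_neg_sq_div_two r).const_mul α).div
    (((hasDerivAt_exp_neg_sq_div_two r).const_mul α).const_add 1) hden).congr_deriv ?_
  rw [fermiDiracDerivParam]
  field_simp
  ring

lemma norm_fermiDirac_le (hα : 0 ≤ α) (r : ℝ) : ‖fermiDirac α r‖ ≤ α * exp (-r ^ 2 / 2) := by
  have hM : 0 ≤ α * exp (-r ^ 2 / 2) := by positivity
  rw [fermiDirac, norm_of_nonneg (by positivity)]
  exact div_le_self hM (by linarith)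

lemma norm_fermiDiracDerivParam_le (hα : 0 ≤ α) (r : ℝ) :
    ‖fermiDiracDerivParam α r‖ ≤ exp (-r ^ 2 / 2) := by
  have hM : 0 ≤ α * exp (-r ^ 2 / 2) := by positivity
  rw [fermiDiracDerivParam, norm_of_nonneg (by positivity)]
  exact div_le_self (exp_pos _).le (one_le_pow₀ (by linarith))

lemma integrableOn_pow_mul_fermiDirac (hα : 0 ≤ α) (k : ℕ) :
    IntegrableOn (fun r => r ^ k * fermiDirac α r) (Ioi 0) :=
  integrableOn_pow_mul_of_norm_le_gaussian (by unfold fermiDirac; fun_prop)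
    (norm_fermiDirac_le hα) k

lemma integrableOn_pow_mul_fermiDiracDerivParam (hα : 0 ≤ α) (k : ℕ) :
    IntegrableOn (fun r => r ^ k * fermiDiracDerivParam α r) (Ioi 0) :=
  integrableOn_pow_mul_of_norm_le_gaussian (by unfold fermiDiracDerivParam; fun_prop)
    (fun r => (norm_fermiDiracDerivParam_le hα r).trans_eq (one_mul _).symm) k

lemma hasDerivAt_integral_pow_mul_fermiDirac (hα : 0 < α) (k : ℕ) :
    HasDerivAt (fun a => ∫ r in Ioi 0, r ^ k * fermiDirac a r)
      (∫ r in Ioi 0, r ^ k * fermiDiracDerivParam α r) α := by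
  refine (hasDerivAt_integral_of_dominated_loc_of_deriv_le (μ := volume.restrict (Ioi 0))
    (F := fun a r => r ^ k * fermiDirac a r) (F' := fun a r => r ^ k * fermiDiracDerivParam a r)
    (Ioi_mem_nhds hα) (.of_forall fun a => ?_) (integrableOn_pow_mul_fermiDirac hα.le k)
    (integrableOn_pow_mul_fermiDiracDerivParam hα.le k).aestronglyMeasurable ?_
    (integrableOn_pow_mul_exp_neg_sq_div_two k) ?_).2
  · unfold fermiDirac
    fun_prop
  · filter_upwards [ae_restrict_mem measurableSet_Ioi] with r (hr : 0 < r) a (ha : 0 < a)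
    rw [norm_mul, norm_of_nonneg (by positivity)]
    exact mul_le_mul_of_nonneg_left (norm_fermiDiracDerivParam_le ha.le r) (by positivity)
  · filter_upwards with r a (ha : 0 < a)
    exact (hasDerivAt_fermiDirac_param r ha.le).const_mul _

/-- Integrate `(r^{k+1} f)' = (k+1) r^k f + r^{k+1} ∂_r f` over `(0, ∞)`, with
`∂_r f = -r α ∂_α f`. -/
lemma mul_integral_pow_mul_fermiDiracDerivParam (hα : 0 ≤ α) (k : ℕ) :
    α * ∫ r in Ioi 0, r ^ (k + 2) * fermiDiracDerivParam α r =
      (k + 1) * ∫ r in Ioi 0, r ^ k * fermiDirac α r := by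
  have hA := (integrableOn_pow_mul_fermiDirac hα k).const_mul ((k : ℝ) + 1)
  have hB := (integrableOn_pow_mul_fermiDiracDerivParam hα (k + 2)).const_mul α
  have hderiv : ∀ r, HasDerivAt (fun r => r ^ (k + 1) * fermiDirac α r)
      ((k + 1) * (r ^ k * fermiDirac α r) - α * (r ^ (k + 2) * fermiDiracDerivParam α r)) r :=
    fun r => by
      refine ((hasDerivAt_pow (k + 1) r).mul (hasDerivAt_fermiDirac_radius hα r)).congr_deriv ?_
      rw [Nat.add_sub_cancel]
      push_cast
      ring
  have hlim := tendsto_zero_of_hasDerivAt_of_integrableOn_Ioi (fun r _ => hderiv r) (hA.sub hB)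
    (integrableOn_pow_mul_fermiDirac hα (k + 1))
  have hzero := integral_Ioi_of_hasDerivAt_of_tendsto' (fun r _ => hderiv r) (hA.sub hB) hlim
  rw [integral_sub hA hB, integral_const_mul, integral_const_mul] at hzero
  rw [zero_pow k.succ_ne_zero, zero_mul, sub_zero] at hzero
  linarith

end FermiDirac

lemma fermiIntegral_eq_integral_Ioi (p α : ℝ) :
    fermiIntegral p α = 3 * volume.real (ball (0 : EuclideanSpace ℝ (Fin 3)) 1) *
      ∫ r in Ioi 0, r ^ 2 * (r ^ p * fermiDirac α r) := by
  have := integral_fun_norm_addHaar (volume : Measure (EuclideanSpace ℝ (Fin 3)))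
    (fun r => r ^ p * fermiDirac α r)
  simp only [finrank_euclideanSpace_fin, smul_eq_mul, nsmul_eq_mul] at this
  simp only [fermiIntegral, fermiDirac, mul_div_assoc] at this ⊢
  rw [this]
  push_cast
  ring

/-- `F₂` is differentiable at every `α > 0` and `α * F₂′(α) = 3 * F₀(α)`. -/
theorem fermiIntegral_deriv (α : ℝ) (hα : 0 < α) :
    DifferentiableAt ℝ (fermiIntegral 2) α ∧
      α * deriv (fermiIntegral 2) α = 3 * fermiIntegral 0 α := by
  set C := 3 * volume.real (ball (0 : EuclideanSpace ℝ (Fin 3)) 1)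
  have hF₂ : fermiIntegral 2 = fun a => C * ∫ r in Ioi 0, r ^ 4 * fermiDirac a r := by
    funext a
    simp only [fermiIntegral_eq_integral_Ioi, rpow_two, ← mul_assoc, ← pow_add]
    rfl
  have hF₀ : fermiIntegral 0 α = C * ∫ r in Ioi 0, r ^ 2 * fermiDirac α r := by
    simp only [fermiIntegral_eq_integral_Ioi, rpow_zero, one_mul]
    rfl
  have hderiv : HasDerivAt (fermiIntegral 2)
      (C * ∫ r in Ioi 0, r ^ 4 * fermiDiracDerivParam α r) α :=
    hF₂ ▸ (hasDerivAt_integral_pow_mul_fermiDirac hα 4).const_mul C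
  refine ⟨hderiv.differentiableAt, ?_⟩
  rw [hderiv.deriv, hF₀, mul_left_comm, mul_integral_pow_mul_fermiDiracDerivParam hα.le 2]
  ring
end

section
/- Let C₀ ≥ 1, let a, b ∈ [1/C₀, C₀], u ∈ ℝ³, and set M(v) = a·exp(−‖v−u‖²/(2b)). Define the collision frequency ν(v) = ∫_{S²} ∫_{ℝ³} [M(v_*) · (1 + M(v))] / [(1 + M(v_*)) · (1 + M(v′)) · (1 + M(v_*′))] dv_* dσ(ω), where σ is the surface measure on the unit sphere S² ⊂ ℝ³ (total mass 4π) and v′ = v − ⟨v − v_*, ω⟩·ω, v_*′ = v_* + ⟨v − v_*, ω⟩·ω. Then for every v ∈ ℝ³, 8√2·π^{5/2} / (C₀^{5/2}·(1+C₀)³) ≤ ν(v) ≤ 8√2·π^{5/2}·C₀^{5/2}·(1+C₀). -/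
/-!
The integrand is squeezed pointwise between `(1 + C₀)⁻³ M(v_*)` and `(1 + C₀) M(v_*)`: its
numerator factor `1 + M v` lies in `[1, 1 + C₀]` and its denominator in `[1, (1 + C₀)³]`, because
`0 ≤ M ≤ a ≤ C₀`. Integrating in `v_*` produces the Gaussian mass `a (2πb)^{3/2}`, integrating in
`ω` the area `4π` of `S²`, and `a b^{3/2}` lies in `[C₀^{-5/2}, C₀^{5/2}]`.
-/

open MeasureTheory Real Set Function

section Maxwellian

variable {V : Type*} [NormedAddCommGroup V] {a b : ℝ} {u : V}

noncomputable def maxwellian (a b : ℝ) (u v : V) : ℝ :=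
  a * exp (-‖v - u‖ ^ 2 / (2 * b))

theorem maxwellian_pos (ha : 0 < a) (v : V) : 0 < maxwellian a b u v := by
  unfold maxwellian; positivity

theorem maxwellian_le (hb : 0 ≤ b) (ha : 0 ≤ a) (v : V) : maxwellian a b u v ≤ a := by
  have hexp : -‖v - u‖ ^ 2 / (2 * b) ≤ 0 :=
    div_nonpos_of_nonpos_of_nonneg (neg_nonpos.mpr (sq_nonneg _)) (by positivity)
  exact mul_le_of_le_one_right ha (exp_le_one_iff.mpr hexp)

theorem continuous_maxwellian : Continuous (maxwellian a b u : V → ℝ) := by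
  unfold maxwellian; fun_prop

variable [InnerProductSpace ℝ V] [FiniteDimensional ℝ V] [MeasurableSpace V] [BorelSpace V]

theorem integral_exp_neg_sq_norm_sub_div (hb : 0 < b) :
    ∫ v : V, exp (-‖v - u‖ ^ 2 / (2 * b)) = (2 * π * b) ^ (Module.finrank ℝ V / 2 : ℝ) := by
  have h := integral_sub_right_eq_self (μ := volume) (fun v : V ↦ exp (-(1 / (2 * b)) * ‖v‖ ^ 2)) u
  rw [GaussianFourier.integral_rexp_neg_mul_sq_norm (by positivity)] at h
  convert h using 3
  · ring_nf
  · field_simp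

theorem integrable_maxwellian (hb : 0 < b) : Integrable (maxwellian a b u : V → ℝ) := by
  refine Integrable.const_mul (Integrable.of_integral_ne_zero ?_) a
  rw [integral_exp_neg_sq_norm_sub_div hb]
  positivity

theorem integral_maxwellian (hb : 0 < b) :
    ∫ v : V, maxwellian a b u v = a * (2 * π * b) ^ (Module.finrank ℝ V / 2 : ℝ) := by
  simp only [maxwellian, integral_const_mul, integral_exp_neg_sq_norm_sub_div hb]

end Maxwellian

theorem fermi_ratio_mem_Icc {C m n p q : ℝ} (hm : m ∈ Icc 0 C) (hn : n ∈ Icc 0 C)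
    (hp : p ∈ Icc 0 C) (hq : q ∈ Icc 0 C) :
    m * (1 + n) / ((1 + m) * (1 + p) * (1 + q)) ∈ Icc (((1 + C) ^ 3)⁻¹ * m) ((1 + C) * m) := by
  obtain ⟨hm0, hmC⟩ := hm
  obtain ⟨hn0, hnC⟩ := hn
  obtain ⟨hp0, hpC⟩ := hp
  obtain ⟨hq0, hqC⟩ := hq
  have hC0 : 0 ≤ C := hm0.trans hmC
  have hden_pos : 0 < (1 + m) * (1 + p) * (1 + q) := by positivity
  have hden_ge : 1 ≤ (1 + m) * (1 + p) * (1 + q) := by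
    nlinarith [mul_nonneg hm0 hp0, mul_nonneg (mul_nonneg hm0 hp0) hq0, mul_nonneg hm0 hq0,
      mul_nonneg hp0 hq0]
  have hden_le : (1 + m) * (1 + p) * (1 + q) ≤ (1 + C) ^ 3 := by
    rw [pow_three, ← mul_assoc]; gcongr
  constructor
  · rw [inv_mul_eq_div]
    exact div_le_div₀ (by positivity) (by nlinarith) hden_pos hden_le
  · calc m * (1 + n) / ((1 + m) * (1 + p) * (1 + q)) ≤ m * (1 + n) :=
          div_le_self (by positivity) hden_ge
      _ ≤ (1 + C) * m := by nlinarith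

section CollisionIntegrand

variable {V : Type*} [NormedAddCommGroup V] [InnerProductSpace ℝ V] {M : V → ℝ}

noncomputable def collisionIntegrand (M : V → ℝ) (v ω vs : V) : ℝ :=
  M vs * (1 + M v) /
    ((1 + M vs) * (1 + M (v - inner ℝ (v - vs) ω • ω)) * (1 + M (vs + inner ℝ (v - vs) ω • ω)))

theorem continuous_collisionIntegrand (hM : Continuous M) (hM0 : ∀ w, 0 ≤ M w) (v : V) :
    Continuous (uncurry (collisionIntegrand M v)) := by
  have hpos w : 0 < 1 + M w := by linarith [hM0 w]
  exact Continuous.div (by fun_prop) (by fun_prop) fun p ↦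
    (mul_pos (mul_pos (hpos _) (hpos _)) (hpos _)).ne'

theorem collisionIntegrand_mem_Icc {C : ℝ} (hM : ∀ w, M w ∈ Icc 0 C) (v ω vs : V) :
    collisionIntegrand M v ω vs ∈ Icc (((1 + C) ^ 3)⁻¹ * M vs) ((1 + C) * M vs) :=
  fermi_ratio_mem_Icc (hM _) (hM _) (hM _) (hM _)

end CollisionIntegrand

section Sandwich

variable {α β : Type*} [MeasurableSpace α] [MeasurableSpace β]

theorem integral_mem_Icc_of_le_mul_of_le_mul {μ : Measure α} {f g : α → ℝ} {c₁ c₂ : ℝ}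
    (hf : AEStronglyMeasurable f μ) (hg : Integrable g μ)
    (hlo : ∀ x, c₁ * g x ≤ f x) (hhi : ∀ x, f x ≤ c₂ * g x) :
    Integrable f μ ∧ ∫ x, f x ∂μ ∈ Icc (c₁ * ∫ x, g x ∂μ) (c₂ * ∫ x, g x ∂μ) := by
  have hf_int : Integrable f μ := integrable_of_le_of_le hf (.of_forall hlo) (.of_forall hhi)
    (hg.const_mul c₁) (hg.const_mul c₂)
  refine ⟨hf_int, ?_, ?_⟩
  · rw [← integral_const_mul]; exact integral_mono (hg.const_mul c₁) hf_int hlo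
  · rw [← integral_const_mul]; exact integral_mono hf_int (hg.const_mul c₂) hhi

theorem integral_integral_mem_Icc_of_le_mul_of_le_mul {μ : Measure α} [IsFiniteMeasure μ]
    {ν : Measure β} [SFinite ν] {f : α → β → ℝ} {g : β → ℝ} {c₁ c₂ : ℝ}
    (hf : StronglyMeasurable (uncurry f)) (hg : Integrable g ν)
    (hlo : ∀ x y, c₁ * g y ≤ f x y) (hhi : ∀ x y, f x y ≤ c₂ * g y) :
    ∫ x, ∫ y, f x y ∂ν ∂μ ∈
      Icc (c₁ * (μ.real univ * ∫ y, g y ∂ν)) (c₂ * (μ.real univ * ∫ y, g y ∂ν)) := by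
  have hinner x := integral_mem_Icc_of_le_mul_of_le_mul (f := f x)
    (hf.comp_measurable measurable_prodMk_left).aestronglyMeasurable hg (hlo x) (hhi x)
  have houter := integral_mem_Icc_of_le_mul_of_le_mul (μ := μ) (g := fun _ ↦ (1 : ℝ))
    (c₁ := c₁ * ∫ y, g y ∂ν) (c₂ := c₂ * ∫ y, g y ∂ν)
    hf.integral_prod_right'.aestronglyMeasurable (integrable_const 1)
    (fun x ↦ by simpa using (hinner x).2.1) (fun x ↦ by simpa using (hinner x).2.2)
  obtain ⟨-, hlo', hhi'⟩ := houter
  simp only [integral_const, smul_eq_mul, mul_one, uncurry_apply_pair] at hlo' hhi'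
  exact ⟨by linarith, by linarith⟩

end Sandwich

theorem toSphere_real_univ_fin_three :
    (volume : Measure (EuclideanSpace ℝ (Fin 3))).toSphere.real univ = 4 * π := by
  rw [measureReal_def, Measure.toSphere_apply_univ, EuclideanSpace.volume_ball_fin_three,
    finrank_euclideanSpace_fin]
  simp only [ENNReal.ofReal_one, one_pow, one_mul, ENNReal.toReal_mul, ENNReal.toReal_ofNat,
    Nat.cast_ofNat, ENNReal.toReal_ofReal (by positivity : (0 : ℝ) ≤ π * 4 / 3)]
  ring

theorem four_pi_mul_two_pi_rpow {a b : ℝ} (hb : 0 ≤ b) :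
    4 * π * (a * (2 * π * b) ^ ((3 : ℝ) / 2)) =
      8 * √2 * π ^ ((5 : ℝ) / 2) * (a * b ^ ((3 : ℝ) / 2)) := by
  have h2 : (2 : ℝ) ^ ((3 : ℝ) / 2) = 2 * √2 := by
    rw [show (3 : ℝ) / 2 = 1 + 1 / 2 by norm_num, rpow_add two_pos, rpow_one, ← sqrt_eq_rpow]
  have hπ : π ^ ((5 : ℝ) / 2) = π * π ^ ((3 : ℝ) / 2) := by
    rw [show (5 : ℝ) / 2 = 1 + 3 / 2 by norm_num, rpow_add pi_pos, rpow_one]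
  rw [mul_rpow (by positivity) hb, mul_rpow zero_le_two pi_pos.le, h2, hπ]
  ring

theorem mul_rpow_three_halves_mem_Icc {C a b : ℝ} (hC : 0 < C) (ha : a ∈ Icc (1 / C) C)
    (hb : b ∈ Icc (1 / C) C) :
    a * b ^ ((3 : ℝ) / 2) ∈ Icc (C ^ ((5 : ℝ) / 2))⁻¹ (C ^ ((5 : ℝ) / 2)) := by
  have hC52 : C ^ ((5 : ℝ) / 2) = C * C ^ ((3 : ℝ) / 2) := by
    rw [show (5 : ℝ) / 2 = 1 + 3 / 2 by norm_num, rpow_add hC, rpow_one]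
  have ha0 : 0 ≤ a := le_trans (by positivity) ha.1
  have hb0 : 0 ≤ b := le_trans (by positivity) hb.1
  constructor
  · rw [hC52, mul_inv, ← inv_rpow hC.le, ← one_div]
    gcongr
    exacts [ha.1, hb.1]
  · rw [hC52]
    gcongr
    exacts [ha.2, hb.2]

theorem four_pi_mul_gaussian_mass_mem_Icc {C a b : ℝ} (hC : 0 < C) (ha : a ∈ Icc (1 / C) C)
    (hb : b ∈ Icc (1 / C) C) :
    4 * π * (a * (2 * π * b) ^ ((3 : ℝ) / 2)) ∈
      Icc (8 * √2 * π ^ ((5 : ℝ) / 2) / C ^ ((5 : ℝ) / 2))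
        (8 * √2 * π ^ ((5 : ℝ) / 2) * C ^ ((5 : ℝ) / 2)) := by
  obtain ⟨hlo, hhi⟩ := mul_rpow_three_halves_mem_Icc hC ha hb
  rw [four_pi_mul_two_pi_rpow (le_trans (by positivity) hb.1), div_eq_mul_inv]
  exact ⟨by gcongr, by gcongr⟩

/-- Uniform two-sided bound on the collision frequency of the linearized fermionic
collision operator with collision kernel `B ≡ 1`: if `M v = a exp(-‖v-u‖²/(2b))` with
`a, b ∈ [1/C₀, C₀]`, and
`ν v = ∫_{S²} ∫_{ℝ³} M v_* (1 + M v) / ((1+M v_*)(1+M v')(1+M v_*')) dv_* dσ(ω)`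
(with `σ` the surface measure `volume.toSphere` on `S²`, of total mass `4π`,
and `v' = v - ⟨v-v_*,ω⟩ω`, `v_*' = v_* + ⟨v-v_*,ω⟩ω`), then for every `v`,
`8√2 π^{5/2} / (C₀^{5/2} (1+C₀)³) ≤ ν v ≤ 8√2 π^{5/2} C₀^{5/2} (1+C₀)`. -/
theorem collision_frequency_bounds (C₀ a b : ℝ) (hC₀ : 1 ≤ C₀)
    (ha : a ∈ Set.Icc (1 / C₀) C₀) (hb : b ∈ Set.Icc (1 / C₀) C₀)
    (u : EuclideanSpace ℝ (Fin 3)) (M : EuclideanSpace ℝ (Fin 3) → ℝ)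
    (hM : ∀ v, M v = a * Real.exp (-‖v - u‖ ^ 2 / (2 * b)))
    (ν : EuclideanSpace ℝ (Fin 3) → ℝ)
    (hν : ∀ v, ν v =
      ∫ ω : Metric.sphere (0 : EuclideanSpace ℝ (Fin 3)) 1,
        ∫ vs : EuclideanSpace ℝ (Fin 3),
          M vs * (1 + M v) /
            ((1 + M vs) *
              (1 + M (v - (inner ℝ (v - vs) (ω : EuclideanSpace ℝ (Fin 3)) : ℝ) •
                  (ω : EuclideanSpace ℝ (Fin 3)))) *
              (1 + M (vs + (inner ℝ (v - vs) (ω : EuclideanSpace ℝ (Fin 3)) : ℝ) •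
                  (ω : EuclideanSpace ℝ (Fin 3)))))
        ∂(volume : Measure (EuclideanSpace ℝ (Fin 3)))
        ∂((volume : Measure (EuclideanSpace ℝ (Fin 3))).toSphere)) :
    ∀ v : EuclideanSpace ℝ (Fin 3),
      8 * Real.sqrt 2 * Real.pi ^ ((5 : ℝ) / 2) / (C₀ ^ ((5 : ℝ) / 2) * (1 + C₀) ^ 3) ≤ ν v ∧
      ν v ≤ 8 * Real.sqrt 2 * Real.pi ^ ((5 : ℝ) / 2) * C₀ ^ ((5 : ℝ) / 2) * (1 + C₀) := by
  intro v
  have hC : 0 < C₀ := zero_lt_one.trans_le hC₀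
  have ha0 : 0 < a := lt_of_lt_of_le (by positivity) ha.1
  have hb0 : 0 < b := lt_of_lt_of_le (by positivity) hb.1
  obtain rfl : M = maxwellian a b u := funext hM
  have hM_mem w : maxwellian a b u w ∈ Icc 0 C₀ :=
    ⟨(maxwellian_pos ha0 w).le, (maxwellian_le hb0.le ha0.le w).trans ha.2⟩
  have h := integral_integral_mem_Icc_of_le_mul_of_le_mul (μ := volume.toSphere)
    (f := fun (ω : Metric.sphere (0 : EuclideanSpace ℝ (Fin 3)) 1) ↦
      collisionIntegrand (maxwellian a b u) v ω)
    ((continuous_collisionIntegrand continuous_maxwellian (fun w ↦ (hM_mem w).1) v).comp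
      (continuous_subtype_val.prodMap continuous_id)).stronglyMeasurable
    (integrable_maxwellian hb0)
    (fun ω vs ↦ (collisionIntegrand_mem_Icc hM_mem v ω vs).1)
    (fun ω vs ↦ (collisionIntegrand_mem_Icc hM_mem v ω vs).2)
  rw [integral_maxwellian hb0, finrank_euclideanSpace_fin, Nat.cast_ofNat,
    toSphere_real_univ_fin_three] at h
  obtain ⟨hmass_lo, hmass_hi⟩ := four_pi_mul_gaussian_mass_mem_Icc hC ha hb
  rw [hν v]
  constructor
  · calc
      _ = ((1 + C₀) ^ 3)⁻¹ * (8 * √2 * π ^ ((5 : ℝ) / 2) / C₀ ^ ((5 : ℝ) / 2)) := by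
        rw [mul_comm, div_mul_eq_div_div, div_eq_inv_mul]
      _ ≤ _ := by gcongr
      _ ≤ _ := h.1
  · calc
      _ ≤ _ := h.2
      _ ≤ (1 + C₀) * (8 * √2 * π ^ ((5 : ℝ) / 2) * C₀ ^ ((5 : ℝ) / 2)) := by gcongr
      _ = _ := mul_comm _ _
end
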